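/- arXiv:2009.01357 — 8 statements merged into one kernel-verified Lean document; each statement's English description precedes it below -/
import Mathlib

section
/- Let X be a set, R a commutative unital ring, and 𝒞 an arbitrary family of subsets of X. Let 𝒜_𝒞 denote the ring of subsets of X generated by 𝒞 (the smallest family of subsets of X containing 𝒞 and ∅ and closed under finite unions, finite intersections, and relative complements). Then 𝒜_𝒞 = {A ⊆ X : 1_A ∈ F_𝒞(X)}. In particular, F_𝒞(X) = F_{𝒜_𝒞}(X). -/
/-- The ring of sets generated by a family `𝒞` of subsets of `X`: the smallest family
containing `𝒞` and `∅` and closed under finite unions, finite intersections and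
relative complements. -/
inductive SetRingGen {X : Type*} (𝒞 : Set (Set X)) : Set X → Prop
  | base {A : Set X} : A ∈ 𝒞 → SetRingGen 𝒞 A
  | empty : SetRingGen 𝒞 ∅
  | union {A B : Set X} : SetRingGen 𝒞 A → SetRingGen 𝒞 B → SetRingGen 𝒞 (A ∪ B)
  | inter {A B : Set X} : SetRingGen 𝒞 A → SetRingGen 𝒞 B → SetRingGen 𝒞 (A ∩ B)
  | diff {A B : Set X} : SetRingGen 𝒞 A → SetRingGen 𝒞 B → SetRingGen 𝒞 (A \ B)

/-- The characteristic function of `A ⊆ X` with values in the ring `R`. -/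
noncomputable def charFun {X : Type*} (R : Type*) [CommRing R] (A : Set X) : X → R :=
  A.indicator fun _ => (1 : R)

/-- `F_𝒞(X)`: the (not necessarily unital) `R`-subalgebra of the `R`-algebra of all
functions `X → R` (pointwise operations) generated by the characteristic functions of
members of `𝒞`. -/
def charSubalgebra (X R : Type*) [CommRing R] (𝒞 : Set (Set X)) :
    NonUnitalSubalgebra R (X → R) :=
  NonUnitalAlgebra.adjoin R {f | ∃ C ∈ 𝒞, f = charFun R C}

set_option linter.unusedSectionVars false

section aux
variable {X R : Type*} [CommRing R] {𝒞 : Set (Set X)}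

lemma srg_biUnion {ι : Type*} (s : Finset ι) (f : ι → Set X)
    (h : ∀ i ∈ s, SetRingGen 𝒞 (f i)) : SetRingGen 𝒞 (⋃ i ∈ s, f i) := by
  classical
  induction s using Finset.induction with
  | empty => simpa using SetRingGen.empty
  | insert _ _ hni ih =>
    rw [Finset.set_biUnion_insert]
    exact SetRingGen.union (h _ (Finset.mem_insert_self _ _))
      (ih fun i hi => h i (Finset.mem_insert_of_mem hi))

def Q (𝒞 : Set (Set X)) (R : Type*) [CommRing R] (f : X → R) : Prop :=
  (Set.range f).Finite ∧ ∀ r : R, r ≠ 0 → SetRingGen 𝒞 (f ⁻¹' {r})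

lemma Q.support {f : X → R} (hf : Q 𝒞 R f) : SetRingGen 𝒞 (Function.support f) := by
  classical
  have : Function.support f = ⋃ r ∈ hf.1.toFinset.erase 0, f ⁻¹' {r} := by
    ext x
    simp only [Function.mem_support, Set.mem_iUnion, Finset.mem_erase, Set.Finite.mem_toFinset,
      Set.mem_range, Set.mem_preimage, Set.mem_singleton_iff]
    constructor
    · intro hx; exact ⟨f x, ⟨hx, x, rfl⟩, rfl⟩
    · rintro ⟨r, ⟨hr0, _⟩, hr⟩; rw [hr]; exact hr0
  rw [this]
  exact srg_biUnion _ _ fun r hr => hf.2 r (Finset.mem_erase.mp hr).1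

lemma Q.inter_preimage {f : X → R} (hf : Q 𝒞 R f) {B : Set X} (hB : SetRingGen 𝒞 B)
    (s : R) : SetRingGen 𝒞 (f ⁻¹' {s} ∩ B) := by
  by_cases hs : s = 0
  · have : f ⁻¹' {s} ∩ B = B \ Function.support f := by
      ext x
      simp only [hs, Set.mem_inter_iff, Set.mem_preimage, Set.mem_singleton_iff,
        Set.mem_diff, Function.mem_support, not_not]
      tauto
    rw [this]; exact SetRingGen.diff hB hf.support
  · exact SetRingGen.inter (hf.2 s hs) hB

lemma Q.add {f g : X → R} (hf : Q 𝒞 R f) (hg : Q 𝒞 R g) : Q 𝒞 R (f + g) := by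
  classical
  constructor
  · exact (Set.Finite.image2 (· + ·) hf.1 hg.1).subset (by rintro _ ⟨x, rfl⟩; exact ⟨f x, ⟨x, rfl⟩, g x, ⟨x, rfl⟩, rfl⟩)
  · intro r hr
    have : (f + g) ⁻¹' {r} = ⋃ p ∈ (hf.1.toFinset ×ˢ hg.1.toFinset).filter
        (fun p : R × R => p.1 + p.2 = r), f ⁻¹' {p.1} ∩ g ⁻¹' {p.2} := by
      ext x
      simp only [Set.mem_preimage, Pi.add_apply, Set.mem_singleton_iff, Set.mem_iUnion,
        Finset.mem_filter, Finset.mem_product, Set.Finite.mem_toFinset, Set.mem_range,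
        Set.mem_inter_iff]
      constructor
      · intro hx; exact ⟨(f x, g x), ⟨⟨⟨x, rfl⟩, ⟨x, rfl⟩⟩, hx⟩, rfl, rfl⟩
      · rintro ⟨p, ⟨_, hp⟩, h1, h2⟩; rw [h1, h2]; exact hp
    rw [this]
    refine srg_biUnion _ _ fun p hp => ?_
    rcases Finset.mem_filter.mp hp with ⟨_, hpr⟩
    by_cases h2 : p.2 = 0
    · have h1 : p.1 ≠ 0 := by rintro h1; apply hr; rw [← hpr, h1, h2, add_zero]
      rw [Set.inter_comm]
      exact hg.inter_preimage (hf.2 p.1 h1) p.2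
    · exact hf.inter_preimage (hg.2 p.2 h2) p.1

lemma Q.mul {f g : X → R} (hf : Q 𝒞 R f) (hg : Q 𝒞 R g) : Q 𝒞 R (f * g) := by
  classical
  constructor
  · exact (Set.Finite.image2 (· * ·) hf.1 hg.1).subset (by rintro _ ⟨x, rfl⟩; exact ⟨f x, ⟨x, rfl⟩, g x, ⟨x, rfl⟩, rfl⟩)
  · intro r hr
    have : (f * g) ⁻¹' {r} = ⋃ p ∈ (hf.1.toFinset ×ˢ hg.1.toFinset).filter
        (fun p : R × R => p.1 * p.2 = r), f ⁻¹' {p.1} ∩ g ⁻¹' {p.2} := by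
      ext x
      simp only [Set.mem_preimage, Pi.mul_apply, Set.mem_singleton_iff, Set.mem_iUnion,
        Finset.mem_filter, Finset.mem_product, Set.Finite.mem_toFinset, Set.mem_range,
        Set.mem_inter_iff]
      constructor
      · intro hx; exact ⟨(f x, g x), ⟨⟨⟨x, rfl⟩, ⟨x, rfl⟩⟩, hx⟩, rfl, rfl⟩
      · rintro ⟨p, ⟨_, hp⟩, h1, h2⟩; rw [h1, h2]; exact hp
    rw [this]
    refine srg_biUnion _ _ fun p hp => ?_
    rcases Finset.mem_filter.mp hp with ⟨_, hpr⟩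
    have h2 : p.2 ≠ 0 := by rintro h2; apply hr; rw [← hpr, h2, mul_zero]
    exact hf.inter_preimage (hg.2 p.2 h2) p.1

lemma Q.smul {f : X → R} (hf : Q 𝒞 R f) (c : R) : Q 𝒞 R (c • f) := by
  classical
  constructor
  · exact (hf.1.image (c * ·)).subset (by rintro _ ⟨x, rfl⟩; exact ⟨f x, ⟨x, rfl⟩, rfl⟩)
  · intro r hr
    have : (c • f) ⁻¹' {r} = ⋃ s ∈ hf.1.toFinset.filter (fun s => c * s = r), f ⁻¹' {s} := by
      ext x
      simp only [Set.mem_preimage, Pi.smul_apply, smul_eq_mul, Set.mem_singleton_iff,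
        Set.mem_iUnion, Finset.mem_filter, Set.Finite.mem_toFinset, Set.mem_range]
      constructor
      · intro hx; exact ⟨f x, ⟨⟨x, rfl⟩, hx⟩, rfl⟩
      · rintro ⟨s, ⟨_, hs⟩, h1⟩; rw [h1]; exact hs
    rw [this]
    refine srg_biUnion _ _ fun s hs => ?_
    rcases Finset.mem_filter.mp hs with ⟨_, hsr⟩
    have : s ≠ 0 := by rintro rfl; apply hr; rw [← hsr, mul_zero]
    exact hf.2 s this

lemma Q.zero : Q 𝒞 R (0 : X → R) := by
  refine ⟨(Set.finite_singleton 0).subset (by rintro _ ⟨x, rfl⟩; simp), fun r hr => ?_⟩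
  have : (0 : X → R) ⁻¹' {r} = ∅ := by ext x; simp [Ne.symm hr]
  rw [this]; exact SetRingGen.empty

variable [Nontrivial R]

lemma Q.char {C : Set X} (hC : SetRingGen 𝒞 C) : Q 𝒞 R (charFun R C) := by
  constructor
  · refine ((Set.finite_singleton (1:R)).insert 0).subset ?_
    rintro _ ⟨x, rfl⟩
    by_cases h : x ∈ C <;> simp [charFun, Set.indicator, h]
  · intro r hr
    by_cases h1 : r = 1
    · have : charFun R C ⁻¹' {r} = C := by
        ext x; by_cases h : x ∈ C <;> simp [charFun, Set.indicator, h, h1, Ne.symm hr]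
      rw [this]; exact hC
    · have : charFun R C ⁻¹' {r} = ∅ := by
        ext x
        by_cases h : x ∈ C <;> simp [charFun, Set.indicator, h, Ne.symm hr, Ne.symm h1]
      rw [this]; exact SetRingGen.empty

lemma mem_Q {f : X → R} (hf : f ∈ charSubalgebra X R 𝒞) : Q 𝒞 R f := by
  induction hf using NonUnitalAlgebra.adjoin_induction with
  | mem x hx => obtain ⟨C, hC, rfl⟩ := hx; exact Q.char (SetRingGen.base hC)
  | add x y _ _ hx hy => exact hx.add hy
  | zero => exact Q.zero
  | mul x y _ _ hx hy => exact hx.mul hy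
  | smul r x _ hx => exact hx.smul r

lemma charFun_empty : charFun R (∅ : Set X) = 0 := by funext x; simp [charFun]

lemma charFun_inter (A B : Set X) :
    charFun R (A ∩ B) = charFun R A * charFun R B := by
  funext x
  by_cases hA : x ∈ A <;> by_cases hB : x ∈ B <;> simp [charFun, Set.indicator, hA, hB]

lemma charFun_union (A B : Set X) :
    charFun R (A ∪ B) = charFun R A + charFun R B - charFun R A * charFun R B := by
  funext x
  by_cases hA : x ∈ A <;> by_cases hB : x ∈ B <;> simp [charFun, Set.indicator, hA, hB]

lemma charFun_diff (A B : Set X) :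
    charFun R (A \ B) = charFun R A - charFun R A * charFun R B := by
  funext x
  by_cases hA : x ∈ A <;> by_cases hB : x ∈ B <;> simp [charFun, Set.indicator, hA, hB]

lemma char_mem {A : Set X} (hA : SetRingGen 𝒞 A) : charFun R A ∈ charSubalgebra X R 𝒞 := by
  induction hA with
  | base h => exact NonUnitalAlgebra.subset_adjoin R ⟨_, h, rfl⟩
  | empty => rw [charFun_empty]; exact zero_mem _
  | union hA hB ihA ihB =>
    rw [charFun_union]; exact sub_mem (add_mem ihA ihB) (mul_mem ihA ihB)
  | inter hA hB ihA ihB => rw [charFun_inter]; exact mul_mem ihA ihB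
  | diff hA hB ihA ihB => rw [charFun_diff]; exact sub_mem ihA (mul_mem ihA ihB)

end aux

/-- `𝒜_𝒞 = {A ⊆ X : 1_A ∈ F_𝒞(X)}`; in particular
`F_𝒞(X) = F_{𝒜_𝒞}(X)`. -/
theorem setRingGen_eq_indicator_mem_charSubalgebra
    (X : Type*) (R : Type*) [CommRing R] [Nontrivial R] (𝒞 : Set (Set X)) :
    {A : Set X | SetRingGen 𝒞 A} =
      {A : Set X | charFun R A ∈ charSubalgebra X R 𝒞} ∧
    charSubalgebra X R 𝒞 = charSubalgebra X R {A : Set X | SetRingGen 𝒞 A} := by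
  constructor
  · ext A
    simp only [Set.mem_setOf_eq]
    constructor
    · exact char_mem
    · intro h
      have hQ := mem_Q h
      have : A = charFun R A ⁻¹' {1} := by
        ext x; by_cases hx : x ∈ A <;> simp [charFun, Set.indicator, hx, (one_ne_zero (α := R)).symm]
      rw [this]
      exact hQ.2 1 one_ne_zero
  · apply le_antisymm
    · apply NonUnitalAlgebra.adjoin_le
      rintro _ ⟨C, hC, rfl⟩
      exact NonUnitalAlgebra.subset_adjoin R ⟨C, SetRingGen.base hC, rfl⟩
    · apply NonUnitalAlgebra.adjoin_le
      rintro _ ⟨C, hC, rfl⟩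
      exact char_mem hC
end

section
/- Let 𝒢 be an ultragraph, let α be a path on 𝒢 with |α| ≥ 1 (finite or infinite), and let {𝔉_n}_{0 ≤ n ≤ |α|} be a complete family of filters for α. Then for every n with 0 ≤ n < |α|, one has 𝔉_n = {C ∈ ℬ(α₁⋯α_n) : s(α_{n+1}) ∈ C}, i.e. 𝔉_n is the principal filter of the singleton {s(α_{n+1})} in ℬ(α₁⋯α_n). -/
/-- An ultragraph: countable sets of vertices and edges, a source map `src : E → V`
and a range map `rng : E → P(V) \ {∅}`. -/
structure Ultragraph (V : Type*) (E : Type*) where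
  src : E → V
  rng : E → Set V
  rng_nonempty : ∀ e, (rng e).Nonempty

namespace Ultragraph

variable {V : Type*} {E : Type*}

/-- `𝒢⁰`: the smallest family of subsets of `V` containing `∅`, all singletons, all
ranges of edges, and closed under finite unions and finite intersections. -/
inductive GZero (G : Ultragraph V E) : Set V → Prop
  | empty : GZero G ∅
  | singleton (v : V) : GZero G {v}
  | range (e : E) : GZero G (G.rng e)
  | union {A B : Set V} : GZero G A → GZero G B → GZero G (A ∪ B)
  | inter {A B : Set V} : GZero G A → GZero G B → GZero G (A ∩ B)

/-- The accommodating family `ℬ`: the smallest family of subsets of `V` containing `𝒢⁰`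
and closed under finite unions, finite intersections and relative complements. -/
inductive AccFam (G : Ultragraph V E) : Set V → Prop
  | base {A : Set V} : G.GZero A → AccFam G A
  | union {A B : Set V} : AccFam G A → AccFam G B → AccFam G (A ∪ B)
  | inter {A B : Set V} : AccFam G A → AccFam G B → AccFam G (A ∩ B)
  | diff {A B : Set V} : AccFam G A → AccFam G B → AccFam G (A \ B)

/-- A finite path: a list of edges with `src (α (i+1)) ∈ rng (α i)`. -/
def IsPath (G : Ultragraph V E) (α : List E) : Prop :=
  α.Chain' fun e f => G.src f ∈ G.rng e

/-- The range of a finite path: the range of its last edge; for the empty path it is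
the whole vertex set. -/
def pathRange (G : Ultragraph V E) (α : List E) : Set V :=
  α.getLast?.elim Set.univ G.rng

/-- `ℬ(α) = {A ∈ ℬ : A ⊆ r(α)}`. -/
def bAt (G : Ultragraph V E) (α : List E) : Set (Set V) :=
  {A | G.AccFam A ∧ A ⊆ G.pathRange α}

/-- The relative range `r(A, α)`, defined by `r(A, ε) = A`, `r(A, e) = r(e)` if
`s(e) ∈ A` and `∅` otherwise, and `r(A, αe) = r(r(A, α), e)`. -/
def relRange (G : Ultragraph V E) (A : Set V) (α : List E) : Set V :=
  α.foldl (fun B e => {v | G.src e ∈ B ∧ v ∈ G.rng e}) A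

/-- `ε(A) = {e : s(e) ∈ A}`. -/
def eps (G : Ultragraph V E) (A : Set V) : Set E := {e | G.src e ∈ A}

/-- The set of sinks: vertices emitting no edge. -/
def sinks (G : Ultragraph V E) : Set V := {v | ∀ e, G.src e ≠ v}

/-- A minimal infinite emitter. -/
def MinInfEmitter (G : Ultragraph V E) (A : Set V) : Prop :=
  G.GZero A ∧ (G.eps A).Infinite ∧
    (∀ B, G.GZero B → B ⊂ A → ¬(G.eps B).Infinite) ∧
    (∀ B, G.GZero B → B ⊂ A → ¬((G.eps B).Finite ∧ B.Infinite))

/-- A minimal sink. -/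
def MinSink (G : Ultragraph V E) (A : Set V) : Prop :=
  G.GZero A ∧ A.Infinite ∧ (G.eps A).Finite ∧
    ∀ B, G.GZero B → B ⊂ A → B.Finite

/-- Condition (RFUM2): the range of each edge is a finite union of sets each of which is
a minimal infinite emitter, a minimal sink, or a singleton consisting of a sink or a
regular vertex. -/
def RFUM2 (G : Ultragraph V E) : Prop :=
  ∀ e : E, ∃ S : Finset (Set V),
    (G.rng e = ⋃ A ∈ S, A) ∧
    ∀ A ∈ S, G.MinInfEmitter A ∨ G.MinSink A ∨
      ∃ v : V, A = {v} ∧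
        (v ∈ G.sinks ∨ ((G.eps {v}).Finite ∧ (G.eps {v}).Nonempty))

end Ultragraph

/-- A filter in a family `𝒜` of sets: a nonempty subset of `𝒜` not containing `∅`,
closed under intersections and upward closed in `𝒜`. -/
def IsFilterIn {V : Type*} (𝒜 ξ : Set (Set V)) : Prop :=
  ξ.Nonempty ∧ ξ ⊆ 𝒜 ∧ ∅ ∉ ξ ∧
    (∀ A ∈ ξ, ∀ B ∈ ξ, A ∩ B ∈ ξ) ∧
    (∀ A ∈ ξ, ∀ B ∈ 𝒜, A ⊆ B → B ∈ ξ)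

/-- An ultrafilter in a family `𝒜` of sets: a maximal filter. -/
def IsUltrafilterIn {V : Type*} (𝒜 ξ : Set (Set V)) : Prop :=
  IsFilterIn 𝒜 ξ ∧ ∀ η, IsFilterIn 𝒜 η → ξ ⊆ η → η = ξ

/-- The prefix `α₁⋯α_n` of an infinite path `α` (0-indexed: `α i` is the `(i+1)`-st edge). -/
def listPre {E : Type*} (α : ℕ → E) (n : ℕ) : List E := (List.range n).map α

/-- If `α` is a path of length `≥ 1` on an ultragraph `𝒢` (finite or
infinite, encoded by its length `L ∈ ℕ∞` and its sequence of edges) and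
`{𝔉_n}_{0 ≤ n ≤ |α|}` is a complete family of filters for `α`, then for `0 ≤ n < |α|`
one has `𝔉_n = {C ∈ ℬ(α₁⋯α_n) : s(α_{n+1}) ∈ C}`. -/
theorem completeFamily_eq_principal
    {V E : Type*} [Countable V] [Countable E] (G : Ultragraph V E)
    (L : ℕ∞) (hL : 1 ≤ L) (α : ℕ → E)
    (hα : ∀ i : ℕ, ((i : ℕ∞) + 1) < L → G.src (α (i + 1)) ∈ G.rng (α i))
    (𝔉 : ℕ → Set (Set V))
    (hfilt : ∀ n : ℕ, (n : ℕ∞) ≤ L → IsFilterIn (G.bAt (listPre α n)) (𝔉 n))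
    (hcomp : ∀ n : ℕ, (n : ℕ∞) < L →
      𝔉 n = {A ∈ G.bAt (listPre α n) | G.relRange A [α n] ∈ 𝔉 (n + 1)}) :
    ∀ n : ℕ, (n : ℕ∞) < L →
      𝔉 n = {C ∈ G.bAt (listPre α n) | G.src (α n) ∈ C} := by
  intro n hn
  have hn1 : ((n + 1 : ℕ) : ℕ∞) ≤ L := by
    push_cast
    exact Order.add_one_le_of_lt hn
  have hfn := hfilt n hn.le
  have hfn1 := hfilt (n + 1) hn1
  have hrel : ∀ A : Set V, G.relRange A [α n] =
      {v | G.src (α n) ∈ A ∧ v ∈ G.rng (α n)} := fun A => rfl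
  -- every member of 𝔉 n contains the source
  have hsrc : ∀ A ∈ 𝔉 n, G.src (α n) ∈ A := by
    intro A hA
    by_contra hs
    have hA' : G.relRange A [α n] ∈ 𝔉 (n + 1) := by
      have := (hcomp n hn) ▸ hA
      exact this.2
    have hempty : G.relRange A [α n] = ∅ := by
      rw [hrel]
      ext v
      simp [hs]
    rw [hempty] at hA'
    exact hfn1.2.2.1 hA'
  -- rng (α n) ∈ 𝔉 (n+1)
  obtain ⟨A0, hA0⟩ := hfn.1
  have hrng : G.rng (α n) ∈ 𝔉 (n + 1) := by
    have h0 : G.relRange A0 [α n] ∈ 𝔉 (n + 1) := ((hcomp n hn) ▸ hA0).2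
    have : G.relRange A0 [α n] = G.rng (α n) := by
      rw [hrel]
      ext v
      simp [hsrc A0 hA0]
    rwa [this] at h0
  ext C
  constructor
  · intro hC
    exact ⟨hfn.2.1 hC, hsrc C hC⟩
  · rintro ⟨hC, hs⟩
    rw [hcomp n hn]
    refine ⟨hC, ?_⟩
    have : G.relRange C [α n] = G.rng (α n) := by
      rw [hrel]; ext v; simp [hs]
    rwa [this]
end

section
/- Let 𝒢 be an ultragraph and let α be an infinite path on 𝒢. Then the family {𝔉_n}_{n=0}^∞ defined by 𝔉_n = {C ∈ ℬ(α₁⋯α_n) : s(α_{n+1}) ∈ C} (the principal filter of {s(α_{n+1})} in ℬ(α₁⋯α_n)) is a complete family of filters for α, each 𝔉_n is an ultrafilter, and this is the only complete family of filters for α. -/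
private lemma listPre_succ {E : Type*} (α : ℕ → E) (n : ℕ) :
    listPre α (n + 1) = listPre α n ++ [α n] := by
  simp [listPre, List.range_succ]

private lemma pathRange_listPre_succ {V E : Type*} (G : Ultragraph V E) (α : ℕ → E) (n : ℕ) :
    G.pathRange (listPre α (n + 1)) = G.rng (α n) := by
  simp [Ultragraph.pathRange, listPre_succ, List.getLast?_concat]

private lemma relRange_single_of_mem {V E : Type*} (G : Ultragraph V E) {A : Set V} {e : E}
    (h : G.src e ∈ A) : G.relRange A [e] = G.rng e := by
  ext v; simp [Ultragraph.relRange, h]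

private lemma relRange_single_of_notMem {V E : Type*} (G : Ultragraph V E) {A : Set V} {e : E}
    (h : G.src e ∉ A) : G.relRange A [e] = ∅ := by
  ext v; simp [Ultragraph.relRange, h]

/-- For an infinite path `α` on an ultragraph `𝒢`, the family of
principal filters `𝔉_n = {C ∈ ℬ(α₁⋯α_n) : s(α_{n+1}) ∈ C}` is a complete family of
filters for `α`, each member is an ultrafilter, and it is the unique complete family of
filters for `α`. -/
theorem infinite_path_unique_complete_family
    {V E : Type*} [Countable V] [Countable E] (G : Ultragraph V E)
    (α : ℕ → E) (hα : ∀ i : ℕ, G.src (α (i + 1)) ∈ G.rng (α i)) :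
    (∀ n : ℕ, IsFilterIn (G.bAt (listPre α n))
        {C ∈ G.bAt (listPre α n) | G.src (α n) ∈ C}) ∧
    (∀ n : ℕ, ({C ∈ G.bAt (listPre α n) | G.src (α n) ∈ C} : Set (Set V)) =
        {A ∈ G.bAt (listPre α n) |
          G.relRange A [α n] ∈ {C ∈ G.bAt (listPre α (n + 1)) | G.src (α (n + 1)) ∈ C}}) ∧
    (∀ n : ℕ, IsUltrafilterIn (G.bAt (listPre α n))
        {C ∈ G.bAt (listPre α n) | G.src (α n) ∈ C}) ∧
    (∀ 𝔉 : ℕ → Set (Set V),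
      (∀ n : ℕ, IsFilterIn (G.bAt (listPre α n)) (𝔉 n)) →
      (∀ n : ℕ, 𝔉 n = {A ∈ G.bAt (listPre α n) | G.relRange A [α n] ∈ 𝔉 (n + 1)}) →
      ∀ n : ℕ, 𝔉 n = {C ∈ G.bAt (listPre α n) | G.src (α n) ∈ C}) := by
  have hmem : ∀ n, G.src (α n) ∈ G.pathRange (listPre α n) := by
    intro n
    cases n with
    | zero => simp [listPre, Ultragraph.pathRange]
    | succ m => rw [pathRange_listPre_succ]; exact hα m
  have hsing : ∀ n, ({G.src (α n)} : Set V) ∈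
      {C ∈ G.bAt (listPre α n) | G.src (α n) ∈ C} :=
    fun n => ⟨⟨.base (.singleton _), by simpa using hmem n⟩, rfl⟩
  have hfil : ∀ n : ℕ, IsFilterIn (G.bAt (listPre α n))
      {C ∈ G.bAt (listPre α n) | G.src (α n) ∈ C} := by
    intro n
    refine ⟨⟨_, hsing n⟩, fun C hC => hC.1, fun h => h.2, ?_, ?_⟩
    · rintro A ⟨hA, hsA⟩ B ⟨hB, hsB⟩
      exact ⟨⟨hA.1.inter hB.1, fun v hv => hA.2 hv.1⟩, hsA, hsB⟩
    · rintro A ⟨hA, hsA⟩ B hB hAB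
      exact ⟨hB, hAB hsA⟩
  have hcomp : ∀ n : ℕ, ({C ∈ G.bAt (listPre α n) | G.src (α n) ∈ C} : Set (Set V)) =
      {A ∈ G.bAt (listPre α n) |
        G.relRange A [α n] ∈ {C ∈ G.bAt (listPre α (n + 1)) | G.src (α (n + 1)) ∈ C}} := by
    intro n
    ext A
    constructor
    · rintro ⟨hA, hsA⟩
      refine ⟨hA, ?_⟩
      rw [relRange_single_of_mem G hsA]
      exact ⟨⟨.base (.range _), by rw [pathRange_listPre_succ]⟩, hα n⟩
    · rintro ⟨hA, hr⟩
      refine ⟨hA, ?_⟩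
      by_contra hs
      rw [relRange_single_of_notMem G hs] at hr
      exact absurd hr.2 (by simp)
  refine ⟨hfil, hcomp, ?_, ?_⟩
  · intro n
    refine ⟨hfil n, fun η hη hsub => Set.ext fun B => ⟨fun hB => ?_, fun hB => hsub hB⟩⟩
    have hS : ({G.src (α n)} : Set V) ∈ η := hsub (hsing n)
    have hint := hη.2.2.2.1 B hB _ hS
    refine ⟨hη.2.1 hB, ?_⟩
    by_contra hs
    have : B ∩ {G.src (α n)} = ∅ :=
      Set.eq_empty_iff_forall_notMem.mpr (by rintro v ⟨hvB, rfl⟩; exact hs hvB)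
    exact hη.2.2.1 (this ▸ hint)
  · intro 𝔉 hF hC n
    obtain ⟨B, hB⟩ := (hF n).1
    rw [hC n] at hB
    obtain ⟨hBb, hBr⟩ := hB
    have hBmem : G.src (α n) ∈ B := by
      by_contra hs
      rw [relRange_single_of_notMem G hs] at hBr
      exact (hF (n + 1)).2.2.1 hBr
    have hrng : G.rng (α n) ∈ 𝔉 (n + 1) := by
      rw [← relRange_single_of_mem G hBmem]; exact hBr
    ext A
    rw [hC n]
    constructor
    · rintro ⟨hA, hr⟩
      refine ⟨hA, ?_⟩
      by_contra hs
      rw [relRange_single_of_notMem G hs] at hr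
      exact (hF (n + 1)).2.2.1 hr
    · rintro ⟨hA, hsA⟩
      exact ⟨hA, by rw [relRange_single_of_mem G hsA]; exact hrng⟩
end

section
/- Let 𝒢 be an ultragraph, α a finite (possibly empty) path on 𝒢, and 𝔉 an ultrafilter in ℬ(α). Then the following are equivalent: (a) for every A ∈ 𝔉, either ε(A) is infinite, or there exists B ∈ ℬ with ∅ ≠ B ⊆ A ∩ G⁰_s; (b) at least one of the following holds: (i) there exists a sink v ∈ G⁰_s with 𝔉 = {C ∈ ℬ(α) : v ∈ C}; (ii) ε(A) is infinite for every A ∈ 𝔉; (iii) A ∩ G⁰_s is infinite for every A ∈ 𝔉. (This is the content of the paper's characterization of the finite-type tight filters: condition (a) is the tightness criterion for the filter of finite type determined by the pair (α, 𝔉).) -/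
private lemma filter_finInter {V : Type*} {𝒜 ξ : Set (Set V)}
    (hF : IsFilterIn 𝒜 ξ) {X : Set V} (hX : X ∈ ξ)
    (s : Finset V) (C : V → Set V) (hC : ∀ v ∈ s, C v ∈ ξ) :
    X ∩ ⋂ v ∈ s, C v ∈ ξ := by
  classical
  induction s using Finset.induction with
  | empty => simpa using hX
  | insert a s hni ih =>
    have h1 : X ∩ ⋂ v ∈ s, C v ∈ ξ := ih (fun v hv => hC v (Finset.mem_insert_of_mem hv))
    have h2 : (X ∩ ⋂ v ∈ s, C v) ∩ C a ∈ ξ :=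
      hF.2.2.2.1 _ h1 _ (hC a (Finset.mem_insert_self a s))
    have : X ∩ ⋂ v ∈ insert a s, C v = (X ∩ ⋂ v ∈ s, C v) ∩ C a := by
      ext x
      simp only [Finset.set_biInter_insert, Set.mem_inter_iff, Set.mem_iInter]
      tauto
    rwa [this]

/-- For a finite (possibly empty) path `α` on an ultragraph `𝒢` and an
ultrafilter `𝔉` in `ℬ(α)`, the tightness condition "for every `A ∈ 𝔉`, either `ε(A)` is
infinite or there is `∅ ≠ B ∈ ℬ` with `B ⊆ A ∩ G⁰_s`" is equivalent to: `𝔉` is the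
principal filter of a sink, or `ε(A)` is infinite for every `A ∈ 𝔉`, or `A ∩ G⁰_s` is
infinite for every `A ∈ 𝔉`. -/
theorem tightness_characterization_finite_type
    {V E : Type*} [Countable V] [Countable E] (G : Ultragraph V E)
    (α : List E) (hα : G.IsPath α)
    (𝔉 : Set (Set V)) (hF : IsUltrafilterIn (G.bAt α) 𝔉) :
    (∀ A ∈ 𝔉, (G.eps A).Infinite ∨
        ∃ B : Set V, G.AccFam B ∧ B.Nonempty ∧ B ⊆ A ∩ G.sinks) ↔
      ((∃ v ∈ G.sinks, 𝔉 = {C ∈ G.bAt α | v ∈ C}) ∨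
        (∀ A ∈ 𝔉, (G.eps A).Infinite) ∨
        (∀ A ∈ 𝔉, (A ∩ G.sinks).Infinite)) := by

  obtain ⟨⟨hne, hsub, hempty, hinter, hup⟩, hmax⟩ := hF
  constructor
  · intro ha
    by_cases h2 : ∀ A ∈ 𝔉, (G.eps A).Infinite
    · exact Or.inr (Or.inl h2)
    by_cases h3 : ∀ A ∈ 𝔉, (A ∩ G.sinks).Infinite
    · exact Or.inr (Or.inr h3)
    push_neg at h2 h3
    obtain ⟨A₀, hA₀F, hA₀⟩ := h2
    obtain ⟨A₁, hA₁F, hA₁⟩ := h3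
    left
    set A := A₀ ∩ A₁ with hAdef
    have hAF : A ∈ 𝔉 := hinter _ hA₀F _ hA₁F
    have hSfin : (A ∩ G.sinks).Finite :=
      hA₁.subset (fun x hx => ⟨hx.1.2, hx.2⟩)
    have hmeet : ∀ C ∈ 𝔉, ((A ∩ C) ∩ G.sinks).Nonempty := by
      intro C hC
      have hAC : A ∩ C ∈ 𝔉 := hinter _ hAF _ hC
      rcases ha _ hAC with h | ⟨B, hB, hBne, hBsub⟩
      · exact absurd (hA₀.subset fun e he => he.1.1) h
      · obtain ⟨x, hx⟩ := hBne
        exact ⟨x, hBsub hx⟩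
    -- find a sink lying in every element of 𝔉
    have hv : ∃ v ∈ A ∩ G.sinks, ∀ C ∈ 𝔉, v ∈ C := by
      by_contra hno
      push_neg at hno
      classical
      have hch : ∀ v ∈ hSfin.toFinset, ∃ C ∈ 𝔉, v ∉ C := by
        intro v hvS
        obtain ⟨C, hC1, hC2⟩ := hno v (hSfin.mem_toFinset.mp hvS)
        exact ⟨C, hC1, hC2⟩
      choose! C hCF hvC using hch
      have hCstar : A ∩ ⋂ v ∈ hSfin.toFinset, C v ∈ 𝔉 :=
        filter_finInter ⟨hne, hsub, hempty, hinter, hup⟩ hAF _ _ hCF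
      obtain ⟨x, hx⟩ := hmeet _ hCstar
      have hxS : x ∈ hSfin.toFinset := hSfin.mem_toFinset.mpr ⟨hx.1.1, hx.2⟩
      have hxC : x ∈ C x := by
        have := hx.1.2.2
        simp only [Set.mem_iInter] at this
        exact this x hxS
      exact hvC x hxS hxC
    obtain ⟨v, hvS, hvall⟩ := hv
    refine ⟨v, hvS.2, ?_⟩
    have hηfil : IsFilterIn (G.bAt α) {C ∈ G.bAt α | v ∈ C} := by
      refine ⟨⟨A, hsub hAF, hvall A hAF⟩, fun C hC => hC.1, ?_, ?_, ?_⟩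
      · intro h; exact h.2
      · rintro B ⟨⟨hB1, hB2⟩, hB3⟩ D ⟨⟨hD1, hD2⟩, hD3⟩
        exact ⟨⟨Ultragraph.AccFam.inter hB1 hD1,
          fun x hx => hB2 hx.1⟩, hB3, hD3⟩
      · rintro B ⟨_, hB3⟩ D hD hBD
        exact ⟨hD, hBD hB3⟩
    have hFsub : 𝔉 ⊆ {C ∈ G.bAt α | v ∈ C} :=
      fun C hC => ⟨hsub hC, hvall C hC⟩
    exact (hmax _ hηfil hFsub).symm
  · rintro (⟨v, hvsink, hFeq⟩ | h | h) A hAF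
    · right
      have hvA : v ∈ A := by rw [hFeq] at hAF; exact hAF.2
      exact ⟨{v}, Ultragraph.AccFam.base (Ultragraph.GZero.singleton v),
        ⟨v, rfl⟩, fun x hx => by rw [Set.mem_singleton_iff] at hx; subst hx; exact ⟨hvA, hvsink⟩⟩
    · exact Or.inl (h A hAF)
    · obtain ⟨x, hx⟩ := (h A hAF).nonempty
      exact Or.inr ⟨{x}, Ultragraph.AccFam.base (Ultragraph.GZero.singleton x),
        ⟨x, rfl⟩, fun y hy => by rw [Set.mem_singleton_iff] at hy; subst hy; exact hx⟩
end

section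
/- Let 𝒢 be an ultragraph with accommodating family ℬ. Then ℬ = { ⋃_{i=1}^n (A_i ∖ B_i) : n ∈ ℕ, A_i, B_i ∈ 𝒢⁰ for all i } (with the empty union equal to ∅). Moreover, for any finite path α on 𝒢, ℬ(α) = { ⋃_{i=1}^n (A_i ∖ B_i) : n ∈ ℕ, A_i, B_i ∈ 𝒢⁰ and A_i, B_i ⊆ r(α) for all i }. -/
namespace UltragraphAux

open Ultragraph

variable {V : Type*} {E : Type*} (G : Ultragraph V E)

/-- Finite unions of differences of `𝒢⁰`-sets, as a list-indexed union. -/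
def LFam (S : Set V) : Prop :=
  ∃ L : List (Set V × Set V), (∀ p ∈ L, G.GZero p.1 ∧ G.GZero p.2) ∧
    S = ⋃ p ∈ L, p.1 \ p.2

variable {G}

lemma lfam_base {A : Set V} (hA : G.GZero A) : LFam G A := by
  refine ⟨[(A, ∅)], ?_, ?_⟩
  · intro p hp
    simp only [List.mem_singleton] at hp
    subst hp
    exact ⟨hA, Ultragraph.GZero.empty⟩
  · simp

lemma lfam_union {S T : Set V} (hS : LFam G S) (hT : LFam G T) :
    LFam G (S ∪ T) := by
  obtain ⟨L₁, hL₁, rfl⟩ := hS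
  obtain ⟨L₂, hL₂, rfl⟩ := hT
  refine ⟨L₁ ++ L₂, ?_, ?_⟩
  · intro p hp
    rcases List.mem_append.mp hp with h | h
    · exact hL₁ p h
    · exact hL₂ p h
  · ext v; simp only [Set.mem_union, Set.mem_iUnion, List.mem_append]
    constructor
    · rintro (⟨p, hp, hv⟩ | ⟨p, hp, hv⟩) <;> exact ⟨p, by tauto, hv⟩
    · rintro ⟨p, hp | hp, hv⟩
      · exact Or.inl ⟨p, hp, hv⟩
      · exact Or.inr ⟨p, hp, hv⟩

lemma lfam_inter {S T : Set V} (hS : LFam G S) (hT : LFam G T) :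
    LFam G (S ∩ T) := by
  obtain ⟨L₁, hL₁, rfl⟩ := hS
  obtain ⟨L₂, hL₂, rfl⟩ := hT
  refine ⟨L₁.flatMap fun p => L₂.map fun q => (p.1 ∩ q.1, p.2 ∪ q.2), ?_, ?_⟩
  · intro r hr
    simp only [List.mem_flatMap, List.mem_map] at hr
    obtain ⟨p, hp, q, hq, rfl⟩ := hr
    exact ⟨Ultragraph.GZero.inter (hL₁ p hp).1 (hL₂ q hq).1,
      Ultragraph.GZero.union (hL₁ p hp).2 (hL₂ q hq).2⟩
  · ext v
    simp only [Set.mem_inter_iff, Set.mem_iUnion, List.mem_flatMap, List.mem_map,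
      Set.mem_diff, Set.mem_union, Set.mem_inter_iff]
    constructor
    · rintro ⟨⟨p, hp, hv₁, hv₂⟩, ⟨q, hq, hw₁, hw₂⟩⟩
      exact ⟨(p.1 ∩ q.1, p.2 ∪ q.2), ⟨p, hp, q, hq, rfl⟩, ⟨hv₁, hw₁⟩,
        by intro h; rcases h with h | h; exacts [hv₂ h, hw₂ h]⟩
    · rintro ⟨r, ⟨p, hp, q, hq, rfl⟩, ⟨hv₁, hw₁⟩, hv₂⟩
      simp only [Set.mem_union, not_or] at hv₂
      exact ⟨⟨p, hp, hv₁, hv₂.1⟩, ⟨q, hq, hw₁, hv₂.2⟩⟩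

lemma lfam_diff_single {S A B : Set V} (hS : LFam G S) (hA : G.GZero A)
    (hB : G.GZero B) : LFam G (S \ (A \ B)) := by
  obtain ⟨L, hL, rfl⟩ := hS
  refine ⟨L.flatMap fun p => [(p.1, p.2 ∪ A), (p.1 ∩ B, p.2)], ?_, ?_⟩
  · intro r hr
    simp only [List.mem_flatMap, List.mem_cons, List.mem_singleton,
      List.not_mem_nil, or_false] at hr
    obtain ⟨p, hp, rfl | rfl⟩ := hr
    · exact ⟨(hL p hp).1, Ultragraph.GZero.union (hL p hp).2 hA⟩
    · exact ⟨Ultragraph.GZero.inter (hL p hp).1 hB, (hL p hp).2⟩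
  · ext v
    simp only [Set.mem_diff, Set.mem_iUnion, List.mem_flatMap, List.mem_cons,
      List.mem_singleton, List.not_mem_nil, or_false, Set.mem_union,
      Set.mem_inter_iff]
    constructor
    · rintro ⟨⟨p, hp, hv₁, hv₂⟩, hv₃⟩
      by_cases hvA : v ∈ A
      · have hvB : v ∈ B := by tauto
        exact ⟨(p.1 ∩ B, p.2), ⟨p, hp, Or.inr rfl⟩, ⟨hv₁, hvB⟩, hv₂⟩
      · exact ⟨(p.1, p.2 ∪ A), ⟨p, hp, Or.inl rfl⟩, hv₁,
          by intro h; rcases h with h | h; exacts [hv₂ h, hvA h]⟩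
    · rintro ⟨r, ⟨p, hp, rfl | rfl⟩, hv₁, hv₂⟩
      · simp only [Set.mem_union] at hv₂
        push_neg at hv₂
        exact ⟨⟨p, hp, hv₁, hv₂.1⟩, fun h => hv₂.2 h.1⟩
      · exact ⟨⟨p, hp, hv₁.1, hv₂⟩, fun h => h.2 hv₁.2⟩

lemma biUnion_cons (p : Set V × Set V) (L : List (Set V × Set V)) :
    (⋃ q ∈ p :: L, q.1 \ q.2) = (p.1 \ p.2) ∪ ⋃ q ∈ L, q.1 \ q.2 := by
  ext v
  simp only [Set.mem_iUnion, Set.mem_union, List.mem_cons]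
  constructor
  · rintro ⟨q, rfl | hq, hv⟩
    · exact Or.inl hv
    · exact Or.inr ⟨q, hq, hv⟩
  · rintro (hv | ⟨q, hq, hv⟩)
    · exact ⟨p, Or.inl rfl, hv⟩
    · exact ⟨q, Or.inr hq, hv⟩

lemma lfam_diff_aux : ∀ L : List (Set V × Set V),
    (∀ p ∈ L, G.GZero p.1 ∧ G.GZero p.2) → ∀ S : Set V, LFam G S →
      LFam G (S \ ⋃ p ∈ L, p.1 \ p.2) := by
  intro L
  induction L with
  | nil =>
    intro _ S hS
    simpa using hS
  | cons p L ih =>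
    intro hL S hS
    rw [biUnion_cons, ← Set.diff_diff]
    exact ih (fun q hq => hL q (List.mem_cons_of_mem p hq)) _
      (lfam_diff_single hS (hL p (List.mem_cons_self)).1
        (hL p (List.mem_cons_self)).2)

lemma lfam_diff {S T : Set V} (hS : LFam G S) (hT : LFam G T) :
    LFam G (S \ T) := by
  obtain ⟨L, hL, rfl⟩ := hT
  exact lfam_diff_aux L hL S hS

lemma acc_of_list : ∀ L : List (Set V × Set V),
    (∀ p ∈ L, G.GZero p.1 ∧ G.GZero p.2) →
      G.AccFam (⋃ p ∈ L, p.1 \ p.2) := by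
  intro L
  induction L with
  | nil =>
    intro _
    simpa using Ultragraph.AccFam.base Ultragraph.GZero.empty
  | cons p L ih =>
    intro hL
    rw [biUnion_cons]
    exact Ultragraph.AccFam.union
      (Ultragraph.AccFam.diff (Ultragraph.AccFam.base (hL p (List.mem_cons_self)).1)
        (Ultragraph.AccFam.base (hL p (List.mem_cons_self)).2))
      (ih fun q hq => hL q (List.mem_cons_of_mem p hq))

lemma accFam_iff_lfam {S : Set V} : G.AccFam S ↔ LFam G S := by
  constructor
  · intro h
    induction h with
    | base h => exact lfam_base h
    | union _ _ ih₁ ih₂ => exact lfam_union ih₁ ih₂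
    | inter _ _ ih₁ ih₂ => exact lfam_inter ih₁ ih₂
    | diff _ _ ih₁ ih₂ => exact lfam_diff ih₁ ih₂
  · rintro ⟨L, hL, rfl⟩
    exact acc_of_list L hL

lemma lfam_iff_fin {S : Set V} : LFam G S ↔
    ∃ (n : ℕ) (A B : Fin n → Set V),
      (∀ i, G.GZero (A i) ∧ G.GZero (B i)) ∧ S = ⋃ i, (A i \ B i) := by
  constructor
  · rintro ⟨L, hL, rfl⟩
    refine ⟨L.length, fun i => (L.get i).1, fun i => (L.get i).2,
      fun i => hL _ (L.get_mem i), ?_⟩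
    ext v
    simp only [Set.mem_iUnion]
    constructor
    · rintro ⟨p, hp, hv⟩
      obtain ⟨i, rfl⟩ := List.mem_iff_get.mp hp
      exact ⟨i, hv⟩
    · rintro ⟨i, hv⟩
      exact ⟨L.get i, L.get_mem i, hv⟩
  · rintro ⟨n, A, B, hAB, rfl⟩
    refine ⟨(List.finRange n).map fun i => (A i, B i), ?_, ?_⟩
    · intro p hp
      simp only [List.mem_map] at hp
      obtain ⟨i, _, rfl⟩ := hp
      exact hAB i
    · ext v
      simp only [Set.mem_iUnion, List.mem_map]
      constructor
      · rintro ⟨i, hv⟩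
        exact ⟨(A i, B i), ⟨i, List.mem_finRange i, rfl⟩, hv⟩
      · rintro ⟨p, ⟨i, _, rfl⟩, hv⟩
        exact ⟨i, hv⟩

end UltragraphAux

/-- The accommodating family `ℬ` of an ultragraph consists exactly of
the finite unions of relative complements `A ∖ B` with `A, B ∈ 𝒢⁰`; moreover, for any
finite path `α`, the members of `ℬ(α)` are the finite unions of sets `A ∖ B` with
`A, B ∈ 𝒢⁰` and `A, B ⊆ r(α)`. -/
theorem accFam_description
    {V E : Type*} [Countable V] [Countable E] (G : Ultragraph V E) :
    (∀ S : Set V, G.AccFam S ↔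
      ∃ (n : ℕ) (A B : Fin n → Set V),
        (∀ i, G.GZero (A i) ∧ G.GZero (B i)) ∧ S = ⋃ i, (A i \ B i)) ∧
    (∀ α : List E, G.IsPath α → ∀ S : Set V, S ∈ G.bAt α ↔
      ∃ (n : ℕ) (A B : Fin n → Set V),
        (∀ i, G.GZero (A i) ∧ G.GZero (B i) ∧
          A i ⊆ G.pathRange α ∧ B i ⊆ G.pathRange α) ∧
        S = ⋃ i, (A i \ B i)) := by
  have part1 : ∀ S : Set V, G.AccFam S ↔
      ∃ (n : ℕ) (A B : Fin n → Set V),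
        (∀ i, G.GZero (A i) ∧ G.GZero (B i)) ∧ S = ⋃ i, (A i \ B i) :=
    fun S => (UltragraphAux.accFam_iff_lfam).trans UltragraphAux.lfam_iff_fin
  refine ⟨part1, ?_⟩
  intro α _ S
  constructor
  · rintro ⟨hAcc, hSub⟩
    obtain ⟨n, A, B, hAB, rfl⟩ := (part1 _).mp hAcc
    rcases eq_or_ne α [] with rfl | hne
    · have hpr : G.pathRange ([] : List E) = Set.univ := rfl
      exact ⟨n, A, B, fun i => ⟨(hAB i).1, (hAB i).2,
        hpr ▸ Set.subset_univ _, hpr ▸ Set.subset_univ _⟩, rfl⟩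
    · have he : α.getLast? = some (α.getLast hne) := List.getLast?_eq_getLast hne
      have hpr : G.pathRange α = G.rng (α.getLast hne) := by
        simp [Ultragraph.pathRange, he]
      set R := G.rng (α.getLast hne) with hRdef
      have hR : G.GZero R := Ultragraph.GZero.range _
      have hSubR : (⋃ i, A i \ B i) ⊆ R := hpr ▸ hSub
      refine ⟨n, fun i => A i ∩ R, fun i => B i ∩ R, fun i =>
        ⟨Ultragraph.GZero.inter (hAB i).1 hR, Ultragraph.GZero.inter (hAB i).2 hR,
          hpr ▸ Set.inter_subset_right, hpr ▸ Set.inter_subset_right⟩, ?_⟩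
      ext v
      simp only [Set.mem_iUnion, Set.mem_diff, Set.mem_inter_iff]
      constructor
      · rintro ⟨i, h1, h2⟩
        have hvR : v ∈ R := hSubR (Set.mem_iUnion.mpr ⟨i, h1, h2⟩)
        exact ⟨i, ⟨h1, hvR⟩, fun h => h2 h.1⟩
      · rintro ⟨i, ⟨h1, hvR⟩, h2⟩
        exact ⟨i, h1, fun h => h2 ⟨h, hvR⟩⟩
  · rintro ⟨n, A, B, hAB, rfl⟩
    refine ⟨(part1 _).mpr ⟨n, A, B, fun i => ⟨(hAB i).1, (hAB i).2.1⟩, rfl⟩, ?_⟩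
    intro v hv
    obtain ⟨i, hv⟩ := Set.mem_iUnion.mp hv
    exact (hAB i).2.2.1 hv.1
end

section
/- Let 𝒢 be an ultragraph and A, B ∈ 𝒢⁰. Then: (i) if A and B are both minimal infinite emitters, then A = B or A ∩ B is finite; (ii) if A and B are both minimal sinks, then A = B or A ∩ B is finite; (iii) if A is a minimal infinite emitter and B is a minimal sink, then A ∩ B is finite. -/
/-- For `A, B ∈ 𝒢⁰`: (i) two minimal infinite emitters are equal or
have finite intersection; (ii) two minimal sinks are equal or have finite intersection;
(iii) a minimal infinite emitter and a minimal sink have finite intersection. -/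
theorem minimal_sets_intersection
    {V E : Type*} [Countable V] [Countable E] (G : Ultragraph V E)
    (A B : Set V) :
    (G.MinInfEmitter A → G.MinInfEmitter B → A = B ∨ (A ∩ B).Finite) ∧
    (G.MinSink A → G.MinSink B → A = B ∨ (A ∩ B).Finite) ∧
    (G.MinInfEmitter A → G.MinSink B → (A ∩ B).Finite) := by
  refine ⟨?_, ?_, ?_⟩
  · rintro ⟨hA0, hAinf, hAmin1, hAmin2⟩ ⟨hB0, hBinf, hBmin1, hBmin2⟩
    have hC0 := hA0.inter hB0
    by_cases hCA : A ∩ B = A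
    · -- A ⊆ B
      have hAB : A ⊆ B := Set.inter_eq_left.mp hCA
      rcases eq_or_ne A B with h | h
      · exact Or.inl h
      · exact absurd hAinf (hBmin1 A hA0 ⟨hAB, fun h' => h (hAB.antisymm h')⟩)
    · right
      have hss : A ∩ B ⊂ A := ⟨Set.inter_subset_left, fun h => hCA (Set.inter_subset_left.antisymm h)⟩
      have h1 := hAmin1 _ hC0 hss
      have h2 := hAmin2 _ hC0 hss
      rw [Set.not_infinite] at h1
      by_contra hfin
      exact h2 ⟨h1, hfin⟩
  · rintro ⟨hA0, hAinf, hAeps, hAmin⟩ ⟨hB0, hBinf, hBeps, hBmin⟩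
    have hC0 := hA0.inter hB0
    by_cases hCA : A ∩ B = A
    · have hAB : A ⊆ B := Set.inter_eq_left.mp hCA
      rcases eq_or_ne A B with h | h
      · exact Or.inl h
      · exact absurd (hBmin A hA0 ⟨hAB, fun h' => h (hAB.antisymm h')⟩) hAinf
    · exact Or.inr (hAmin _ hC0 ⟨Set.inter_subset_left, fun h => hCA (Set.inter_subset_left.antisymm h)⟩)
  · rintro ⟨hA0, hAinf, hAmin1, hAmin2⟩ ⟨hB0, hBinf2, hBeps, hBmin⟩
    have hC0 := hA0.inter hB0
    by_cases hCA : A ∩ B = A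
    · have hAB : A ⊆ B := Set.inter_eq_left.mp hCA
      rcases eq_or_ne A B with h | h
      · exact absurd (h ▸ hAinf) hBeps.not_infinite
      · rw [hCA]
        exact hBmin A hA0 ⟨hAB, fun h' => h (hAB.antisymm h')⟩
    · have hss : A ∩ B ⊂ A := ⟨Set.inter_subset_left, fun h => hCA (Set.inter_subset_left.antisymm h)⟩
      have h1 := hAmin1 _ hC0 hss
      have h2 := hAmin2 _ hC0 hss
      rw [Set.not_infinite] at h1
      by_contra hfin
      exact h2 ⟨h1, hfin⟩
end

section
/- Suppose the ultragraph 𝒢 satisfies Condition (RFUM2). Let α be a finite (possibly empty) path on 𝒢 and 𝔉 an ultrafilter in ℬ(α). Then: (i) if there exists A ∈ 𝔉 with A finite, then there is a unique v ∈ r(α) such that 𝔉 = {C ∈ ℬ(α) : v ∈ C}; (ii) if every A ∈ 𝔉 is infinite, then there exists a unique B with B ∈ A_s ∪ A_∞ and B ∈ 𝔉 (where A_s denotes the minimal sinks and A_∞ the minimal infinite emitters of 𝒢). -/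
section Helpers

variable {V : Type*} {E : Type*}

/-- If `A ∈ 𝒜` meets every member of an ultrafilter `𝔉` in `𝒜`, then `A ∈ 𝔉`. -/
lemma ultra_mem_of_meets {𝒜 𝔉 : Set (Set V)}
    (hinter : ∀ A ∈ 𝒜, ∀ B ∈ 𝒜, A ∩ B ∈ 𝒜)
    (hF : IsUltrafilterIn 𝒜 𝔉) {A : Set V} (hA : A ∈ 𝒜)
    (hmeet : ∀ F ∈ 𝔉, (F ∩ A).Nonempty) : A ∈ 𝔉 := by
  obtain ⟨⟨⟨F₀, hF₀⟩, hsub, hne, hi, hu⟩, hmax⟩ := hF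
  set η : Set (Set V) := {C | C ∈ 𝒜 ∧ ∃ F ∈ 𝔉, F ∩ A ⊆ C} with hηdef
  have hηfilter : IsFilterIn 𝒜 η := by
    refine ⟨⟨A, hA, F₀, hF₀, Set.inter_subset_right⟩, fun C hC => hC.1, ?_, ?_, ?_⟩
    · rintro ⟨-, F, hFm, hsub'⟩
      exact (hmeet F hFm).ne_empty (Set.subset_empty_iff.mp hsub')
    · rintro C ⟨hC𝒜, F₁, hF₁, hs₁⟩ D ⟨hD𝒜, F₂, hF₂, hs₂⟩
      refine ⟨hinter _ hC𝒜 _ hD𝒜, F₁ ∩ F₂, hi _ hF₁ _ hF₂, ?_⟩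
      intro x hx
      exact ⟨hs₁ ⟨hx.1.1, hx.2⟩, hs₂ ⟨hx.1.2, hx.2⟩⟩
    · rintro C ⟨hC𝒜, F, hFm, hs⟩ B hB𝒜 hCB
      exact ⟨hB𝒜, F, hFm, hs.trans hCB⟩
  have hFη : 𝔉 ⊆ η := fun F hFm => ⟨hsub hFm, F, hFm, Set.inter_subset_left⟩
  have hηeq := hmax η hηfilter hFη
  rw [← hηeq]
  exact ⟨hA, F₀, hF₀, Set.inter_subset_right⟩

/-- An ultrafilter in a ∩-closed family is prime. -/
lemma ultra_prime {𝒜 𝔉 : Set (Set V)}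
    (hinter : ∀ A ∈ 𝒜, ∀ B ∈ 𝒜, A ∩ B ∈ 𝒜)
    (hF : IsUltrafilterIn 𝒜 𝔉) {A B : Set V} (hA : A ∈ 𝒜) (hB : B ∈ 𝒜)
    (hAB : A ∪ B ∈ 𝔉) : A ∈ 𝔉 ∨ B ∈ 𝔉 := by
  by_cases hmA : ∀ F ∈ 𝔉, (F ∩ A).Nonempty
  · exact Or.inl (ultra_mem_of_meets hinter hF hA hmA)
  by_cases hmB : ∀ F ∈ 𝔉, (F ∩ B).Nonempty
  · exact Or.inr (ultra_mem_of_meets hinter hF hB hmB)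
  exfalso
  push_neg at hmA hmB
  obtain ⟨F₁, hF₁, h1⟩ := hmA
  obtain ⟨F₂, hF₂, h2⟩ := hmB
  obtain ⟨⟨-, -, hne, hi, -⟩, -⟩ := hF
  have hmem : (F₁ ∩ F₂) ∩ (A ∪ B) ∈ 𝔉 := hi _ (hi _ hF₁ _ hF₂) _ hAB
  have hempty : (F₁ ∩ F₂) ∩ (A ∪ B) = ∅ := by
    apply Set.subset_empty_iff.mp
    rintro x ⟨⟨hx1, hx2⟩, hx3 | hx3⟩
    · exact absurd (h1 ▸ (⟨hx1, hx3⟩ : x ∈ F₁ ∩ A)) (Set.notMem_empty x)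
    · exact absurd (h2 ▸ (⟨hx2, hx3⟩ : x ∈ F₂ ∩ B)) (Set.notMem_empty x)
  exact hne (hempty ▸ hmem)

/-- A finite union of members of a family closed under `∅` and `∪` is a member. -/
lemma biUnion_mem_fam {𝒜 : Set (Set V)}
    (hempty : ∅ ∈ 𝒜) (hunion : ∀ A ∈ 𝒜, ∀ B ∈ 𝒜, A ∪ B ∈ 𝒜)
    {ι : Type*} (s : Finset ι) (Q : ι → Set V)
    (hQ : ∀ i ∈ s, Q i ∈ 𝒜) : (⋃ i ∈ s, Q i) ∈ 𝒜 := by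
  classical
  induction s using Finset.induction with
  | empty => simpa using hempty
  | @insert a s ha ih =>
    rw [Finset.set_biUnion_insert]
    exact hunion _ (hQ a (Finset.mem_insert_self a s)) _
      (ih fun i hi => hQ i (Finset.mem_insert_of_mem hi))

/-- If a finite union of members of `𝒜` lies in an ultrafilter `𝔉` in `𝒜`, then some
member of the union lies in `𝔉`. -/
lemma exists_mem_of_biUnion_mem {𝒜 𝔉 : Set (Set V)}
    (hempty : ∅ ∈ 𝒜) (hinter : ∀ A ∈ 𝒜, ∀ B ∈ 𝒜, A ∩ B ∈ 𝒜)
    (hunion : ∀ A ∈ 𝒜, ∀ B ∈ 𝒜, A ∪ B ∈ 𝒜)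
    (hF : IsUltrafilterIn 𝒜 𝔉) {ι : Type*} (s : Finset ι) (Q : ι → Set V)
    (hQ : ∀ i ∈ s, Q i ∈ 𝒜) (hm : (⋃ i ∈ s, Q i) ∈ 𝔉) : ∃ i ∈ s, Q i ∈ 𝔉 := by
  classical
  induction s using Finset.induction with
  | empty =>
    simp only [Finset.notMem_empty, Set.iUnion_of_empty, Set.iUnion_empty] at hm
    exact absurd hm hF.1.2.2.1
  | @insert a s ha ih =>
    rw [Finset.set_biUnion_insert] at hm
    have hrest : (⋃ i ∈ s, Q i) ∈ 𝒜 :=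
      biUnion_mem_fam hempty hunion s Q fun i hi => hQ i (Finset.mem_insert_of_mem hi)
    rcases ultra_prime hinter hF (hQ a (Finset.mem_insert_self a s)) hrest hm with h | h
    · exact ⟨a, Finset.mem_insert_self a s, h⟩
    · obtain ⟨i, hi, hQi⟩ := ih (fun i hi => hQ i (Finset.mem_insert_of_mem hi)) h
      exact ⟨i, Finset.mem_insert_of_mem hi, hQi⟩

/-- Every set in `𝒢⁰` is contained in a finite set together with finitely many edge
ranges. -/
lemma Ultragraph.gzero_bound (G : Ultragraph V E) {A : Set V} (h : G.GZero A) :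
    ∃ (F : Finset V) (S : Finset E), A ⊆ ↑F ∪ ⋃ e ∈ S, G.rng e := by
  classical
  have mono : ∀ (F1 F2 : Finset V) (S1 S2 : Finset E), F1 ⊆ F2 → S1 ⊆ S2 →
      (↑F1 ∪ ⋃ e ∈ S1, G.rng e) ⊆ (↑F2 ∪ ⋃ e ∈ S2, G.rng e) := by
    intro F1 F2 S1 S2 hFs hSs
    apply Set.union_subset_union (Finset.coe_subset.mpr hFs)
    intro x hx
    simp only [Set.mem_iUnion, exists_prop] at hx ⊢
    obtain ⟨e, he, hxe⟩ := hx
    exact ⟨e, hSs he, hxe⟩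
  induction h with
  | empty => exact ⟨∅, ∅, by simp⟩
  | singleton v => exact ⟨{v}, ∅, by simp⟩
  | range e =>
    refine ⟨∅, {e}, ?_⟩
    intro x hx
    simp only [Finset.coe_empty, Set.mem_union, Set.mem_iUnion, Finset.mem_singleton,
      exists_prop]
    exact Or.inr ⟨e, rfl, hx⟩
  | union h1 h2 ih1 ih2 =>
    obtain ⟨F1, S1, hb1⟩ := ih1
    obtain ⟨F2, S2, hb2⟩ := ih2
    exact ⟨F1 ∪ F2, S1 ∪ S2,
      Set.union_subset
        (hb1.trans (mono _ _ _ _ Finset.subset_union_left Finset.subset_union_left))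
        (hb2.trans (mono _ _ _ _ Finset.subset_union_right Finset.subset_union_right))⟩
  | inter h1 h2 ih1 ih2 =>
    obtain ⟨F1, S1, hb1⟩ := ih1
    exact ⟨F1, S1, Set.inter_subset_left.trans hb1⟩

/-- Every set in `ℬ` is contained in a finite set together with finitely many edge
ranges. -/
lemma Ultragraph.accfam_bound (G : Ultragraph V E) {A : Set V} (h : G.AccFam A) :
    ∃ (F : Finset V) (S : Finset E), A ⊆ ↑F ∪ ⋃ e ∈ S, G.rng e := by
  classical
  have mono : ∀ (F1 F2 : Finset V) (S1 S2 : Finset E), F1 ⊆ F2 → S1 ⊆ S2 →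
      (↑F1 ∪ ⋃ e ∈ S1, G.rng e) ⊆ (↑F2 ∪ ⋃ e ∈ S2, G.rng e) := by
    intro F1 F2 S1 S2 hFs hSs
    apply Set.union_subset_union (Finset.coe_subset.mpr hFs)
    intro x hx
    simp only [Set.mem_iUnion, exists_prop] at hx ⊢
    obtain ⟨e, he, hxe⟩ := hx
    exact ⟨e, hSs he, hxe⟩
  induction h with
  | base h0 => exact G.gzero_bound h0
  | union h1 h2 ih1 ih2 =>
    obtain ⟨F1, S1, hb1⟩ := ih1
    obtain ⟨F2, S2, hb2⟩ := ih2
    exact ⟨F1 ∪ F2, S1 ∪ S2,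
      Set.union_subset
        (hb1.trans (mono _ _ _ _ Finset.subset_union_left Finset.subset_union_left))
        (hb2.trans (mono _ _ _ _ Finset.subset_union_right Finset.subset_union_right))⟩
  | inter h1 h2 ih1 ih2 =>
    obtain ⟨F1, S1, hb1⟩ := ih1
    exact ⟨F1, S1, Set.inter_subset_left.trans hb1⟩
  | diff h1 h2 ih1 ih2 =>
    obtain ⟨F1, S1, hb1⟩ := ih1
    exact ⟨F1, S1, Set.diff_subset.trans hb1⟩

/-- A minimal sink or minimal infinite emitter has no infinite proper `𝒢⁰`-subset. -/
lemma min_no_infinite_proper {G : Ultragraph V E} {B : Set V}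
    (h : G.MinSink B ∨ G.MinInfEmitter B) {C : Set V}
    (hC : G.GZero C) (hCB : C ⊂ B) (hCi : C.Infinite) : False := by
  rcases h with h | h
  · exact hCi (h.2.2.2 C hC hCB)
  · have h1 : ¬(G.eps C).Infinite := h.2.2.1 C hC hCB
    have h2 := h.2.2.2 C hC hCB
    exact h2 ⟨Set.not_infinite.mp h1, hCi⟩

lemma min_gzero {G : Ultragraph V E} {B : Set V}
    (h : G.MinSink B ∨ G.MinInfEmitter B) : G.GZero B := by
  rcases h with h | h
  · exact h.1
  · exact h.1

/-- From a filter one can find a member avoiding any finite set each of whose points is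
avoided by some member. -/
lemma filter_exists_avoid {𝒜 𝔉 : Set (Set V)} (hfil : IsFilterIn 𝒜 𝔉)
    (s : Finset V) (h : ∀ v ∈ s, ∃ B ∈ 𝔉, v ∉ B) : ∃ C ∈ 𝔉, ∀ v ∈ s, v ∉ C := by
  classical
  induction s using Finset.induction with
  | empty =>
    obtain ⟨F₀, hF₀⟩ := hfil.1
    exact ⟨F₀, hF₀, by simp⟩
  | @insert a s ha ih =>
    obtain ⟨C, hC, hav⟩ := ih fun v hv => h v (Finset.mem_insert_of_mem hv)
    obtain ⟨B, hB, hvB⟩ := h a (Finset.mem_insert_self a s)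
    refine ⟨C ∩ B, hfil.2.2.2.1 _ hC _ hB, ?_⟩
    intro v hv hvCB
    rcases Finset.mem_insert.mp hv with rfl | hv
    · exact hvB hvCB.2
    · exact hav v hv hvCB.1

end Helpers

/-- Suppose `𝒢` satisfies Condition (RFUM2), `α` is a finite (possibly
empty) path and `𝔉` is an ultrafilter in `ℬ(α)`. Then: (i) if `𝔉` contains a finite
set, then `𝔉` is the principal filter of `{v}` for a unique `v ∈ r(α)`; (ii) if every
member of `𝔉` is infinite, then `𝔉` contains a unique `B ∈ A_s ∪ A_∞`. -/
theorem rfum2_ultrafilter_dichotomy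
    {V E : Type*} [Countable V] [Countable E] (G : Ultragraph V E)
    (hR : G.RFUM2) (α : List E) (hα : G.IsPath α)
    (𝔉 : Set (Set V)) (hF : IsUltrafilterIn (G.bAt α) 𝔉) :
    ((∃ A ∈ 𝔉, A.Finite) →
      ∃! v : V, v ∈ G.pathRange α ∧ 𝔉 = {C ∈ G.bAt α | v ∈ C}) ∧
    ((∀ A ∈ 𝔉, A.Infinite) →
      ∃! B : Set V, (G.MinSink B ∨ G.MinInfEmitter B) ∧ B ∈ 𝔉) := by
  classical
  set 𝒜 : Set (Set V) := G.bAt α with h𝒜def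
  have hempty𝒜 : ∅ ∈ 𝒜 := ⟨Ultragraph.AccFam.base Ultragraph.GZero.empty, Set.empty_subset _⟩
  have hinter𝒜 : ∀ A ∈ 𝒜, ∀ B ∈ 𝒜, A ∩ B ∈ 𝒜 := fun A hA B hB =>
    ⟨hA.1.inter hB.1, Set.inter_subset_left.trans hA.2⟩
  have hunion𝒜 : ∀ A ∈ 𝒜, ∀ B ∈ 𝒜, A ∪ B ∈ 𝒜 := fun A hA B hB =>
    ⟨hA.1.union hB.1, Set.union_subset hA.2 hB.2⟩
  obtain ⟨hfil, hmax⟩ := hF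
  obtain ⟨hne, hsub, hnoempty, hi, hu⟩ := hfil
  constructor
  · -- part (i)
    rintro ⟨A, hAF, hAfin⟩
    -- find a point of A common to all members of 𝔉
    have hkey : ∃ v ∈ A, ∀ B ∈ 𝔉, v ∈ B := by
      by_contra hcon
      push_neg at hcon
      obtain ⟨C, hC, hav⟩ := filter_exists_avoid ⟨hne, hsub, hnoempty, hi, hu⟩
        hAfin.toFinset (fun v hv => hcon v (hAfin.mem_toFinset.mp hv))
      have hmem : A ∩ C ∈ 𝔉 := hi _ hAF _ hC
      have : A ∩ C = ∅ := by
        apply Set.subset_empty_iff.mp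
        rintro x ⟨hxA, hxC⟩
        exact hav x (hAfin.mem_toFinset.mpr hxA) hxC
      exact hnoempty (this ▸ hmem)
    obtain ⟨v, hvA, hvall⟩ := hkey
    have hvr : v ∈ G.pathRange α := (hsub hAF).2 hvA
    refine ⟨v, ⟨hvr, ?_⟩, ?_⟩
    · -- 𝔉 = principal filter at v
      set η : Set (Set V) := {C ∈ G.bAt α | v ∈ C} with hηdef
      have hηfil : IsFilterIn 𝒜 η := by
        refine ⟨⟨A, hsub hAF, hvA⟩, fun C hC => hC.1, ?_, ?_, ?_⟩
        · rintro ⟨-, hve⟩; exact hve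
        · rintro C ⟨hC𝒜, hvC⟩ D ⟨hD𝒜, hvD⟩
          exact ⟨hinter𝒜 _ hC𝒜 _ hD𝒜, hvC, hvD⟩
        · rintro C ⟨hC𝒜, hvC⟩ B hB𝒜 hCB
          exact ⟨hB𝒜, hCB hvC⟩
      have hFη : 𝔉 ⊆ η := fun B hB => ⟨hsub hB, hvall B hB⟩
      exact (hmax η hηfil hFη).symm
    · -- uniqueness
      rintro w ⟨hwr, hweq⟩
      have hveq : 𝔉 = {C ∈ G.bAt α | v ∈ C} := by
        set η : Set (Set V) := {C ∈ G.bAt α | v ∈ C} with hηdef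
        have hηfil : IsFilterIn 𝒜 η := by
          refine ⟨⟨A, hsub hAF, hvA⟩, fun C hC => hC.1, ?_, ?_, ?_⟩
          · rintro ⟨-, hve⟩; exact hve
          · rintro C ⟨hC𝒜, hvC⟩ D ⟨hD𝒜, hvD⟩
            exact ⟨hinter𝒜 _ hC𝒜 _ hD𝒜, hvC, hvD⟩
          · rintro C ⟨hC𝒜, hvC⟩ B hB𝒜 hCB
            exact ⟨hB𝒜, hCB hvC⟩
        have hFη : 𝔉 ⊆ η := fun B hB => ⟨hsub hB, hvall B hB⟩
        exact (hmax η hηfil hFη).symm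
      have hw𝒜 : ({w} : Set V) ∈ G.bAt α :=
        ⟨Ultragraph.AccFam.base (Ultragraph.GZero.singleton w),
          Set.singleton_subset_iff.mpr hwr⟩
      have hwF : ({w} : Set V) ∈ 𝔉 := by
        rw [hweq]; exact ⟨hw𝒜, rfl⟩
      rw [hveq] at hwF
      exact (Set.mem_singleton_iff.mp hwF.2).symm
  · -- part (ii)
    intro hInf
    have hUF : IsUltrafilterIn 𝒜 𝔉 := ⟨⟨hne, hsub, hnoempty, hi, hu⟩, hmax⟩
    -- existence of a minimal set in 𝔉
    have hex : ∃ B : Set V, (G.MinSink B ∨ G.MinInfEmitter B) ∧ B ∈ 𝔉 := by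
      obtain ⟨A₀, hA₀⟩ := hne
      rcases hlast : α.getLast? with _ | e
      · -- empty path: range is univ
        have hpr : G.pathRange α = Set.univ := by
          simp [Ultragraph.pathRange, hlast]
        obtain ⟨Fv, Se, hbound⟩ := G.accfam_bound (hsub hA₀).1
        -- the finitely many pieces
        set PS : Finset (Set V) :=
          Fv.image (fun v => ({v} : Set V)) ∪ Se.biUnion (fun e => (hR e).choose)
          with hPSdef
        have hPz : ∀ P ∈ PS, G.GZero P := by
          intro P hP
          rcases Finset.mem_union.mp hP with hP | hP
          · obtain ⟨v, -, rfl⟩ := Finset.mem_image.mp hP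
            exact Ultragraph.GZero.singleton v
          · obtain ⟨e, -, hPe⟩ := Finset.mem_biUnion.mp hP
            rcases (hR e).choose_spec.2 P hPe with h | h | ⟨v, rfl, -⟩
            · exact h.1
            · exact h.1
            · exact Ultragraph.GZero.singleton v
        have hPmin : ∀ P ∈ PS, P.Infinite → G.MinSink P ∨ G.MinInfEmitter P := by
          intro P hP hPinf
          rcases Finset.mem_union.mp hP with hP | hP
          · obtain ⟨v, -, rfl⟩ := Finset.mem_image.mp hP
            exact absurd (Set.finite_singleton v) hPinf
          · obtain ⟨e, -, hPe⟩ := Finset.mem_biUnion.mp hP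
            rcases (hR e).choose_spec.2 P hPe with h | h | ⟨v, rfl, -⟩
            · exact Or.inr h
            · exact Or.inl h
            · exact absurd (Set.finite_singleton v) hPinf
        have hcover : A₀ ⊆ ⋃ P ∈ PS, P := by
          intro x hx
          simp only [Set.mem_iUnion, exists_prop]
          rcases hbound hx with hx' | hx'
          · exact ⟨{x}, Finset.mem_union_left _
              (Finset.mem_image_of_mem (fun v => ({v} : Set V)) hx'), rfl⟩
          · simp only [Set.mem_iUnion, exists_prop] at hx'
            obtain ⟨e, he, hxe⟩ := hx'
            have := (hR e).choose_spec.1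
            rw [this] at hxe
            simp only [Set.mem_iUnion, exists_prop] at hxe
            obtain ⟨P, hPe, hxP⟩ := hxe
            exact ⟨P, Finset.mem_union_right _ (Finset.mem_biUnion.mpr ⟨e, he, hPe⟩), hxP⟩
        -- apply the union lemma to the pieces intersected with A₀
        have hQ𝒜 : ∀ P ∈ PS, A₀ ∩ P ∈ 𝒜 := by
          intro P hP
          exact ⟨(hsub hA₀).1.inter (Ultragraph.AccFam.base (hPz P hP)),
            Set.inter_subset_left.trans (hsub hA₀).2⟩
        have hunionF : (⋃ P ∈ PS, A₀ ∩ P) ∈ 𝔉 := by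
          have : (⋃ P ∈ PS, A₀ ∩ P) = A₀ := by
            apply Set.Subset.antisymm
            · intro x hx
              simp only [Set.mem_iUnion, exists_prop] at hx
              obtain ⟨P, -, hxP, -⟩ := hx
              exact hxP
            · intro x hx
              obtain ⟨P, hP, hxP⟩ := Set.mem_iUnion₂.mp (hcover hx)
              exact Set.mem_iUnion₂.mpr ⟨P, hP, hx, hxP⟩
          rw [this]; exact hA₀
        obtain ⟨P, hPPS, hPF⟩ := exists_mem_of_biUnion_mem hempty𝒜 hinter𝒜 hunion𝒜 hUF
          PS (fun P => A₀ ∩ P) hQ𝒜 hunionF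
        have hPinf : P.Infinite := (hInf _ hPF).mono Set.inter_subset_right
        have hPmem : P ∈ 𝔉 := by
          refine hu _ hPF P ⟨Ultragraph.AccFam.base (hPz P hPPS), ?_⟩ Set.inter_subset_right
          rw [hpr]; exact Set.subset_univ P
        exact ⟨P, hPmin P hPPS hPinf, hPmem⟩
      · -- nonempty path: range is rng e
        have hpr : G.pathRange α = G.rng e := by
          simp [Ultragraph.pathRange, hlast]
        have hpr𝒜 : G.pathRange α ∈ 𝒜 := by
          refine ⟨?_, subset_rfl⟩
          rw [hpr]; exact Ultragraph.AccFam.base (Ultragraph.GZero.range e)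
        have hprF : G.pathRange α ∈ 𝔉 := hu _ hA₀ _ hpr𝒜 (hsub hA₀).2
        set S := (hR e).choose with hSdef
        have hSspec := (hR e).choose_spec
        have hP𝒜 : ∀ P ∈ S, P ∈ 𝒜 := by
          intro P hP
          have hz : G.GZero P := by
            rcases hSspec.2 P hP with h | h | ⟨v, rfl, -⟩
            · exact h.1
            · exact h.1
            · exact Ultragraph.GZero.singleton v
          refine ⟨Ultragraph.AccFam.base hz, ?_⟩
          rw [hpr, hSspec.1]
          intro x hx
          simp only [Set.mem_iUnion, exists_prop]
          exact ⟨P, hP, hx⟩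
        have hunionF : (⋃ P ∈ S, P) ∈ 𝔉 := by
          have : (⋃ P ∈ S, P) = G.pathRange α := by rw [hpr, hSspec.1]
          rw [this]; exact hprF
        obtain ⟨P, hPS, hPF⟩ := exists_mem_of_biUnion_mem hempty𝒜 hinter𝒜 hunion𝒜 hUF
          S id hP𝒜 hunionF
        have hPinf : P.Infinite := hInf _ hPF
        rcases hSspec.2 P hPS with h | h | ⟨v, rfl, -⟩
        · exact ⟨P, Or.inr h, hPF⟩
        · exact ⟨P, Or.inl h, hPF⟩
        · exact absurd (Set.finite_singleton v) hPinf
    obtain ⟨B, hBmin, hBF⟩ := hex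
    refine ⟨B, ⟨hBmin, hBF⟩, ?_⟩
    rintro B' ⟨hB'min, hB'F⟩
    by_contra hne'
    have hCmem : B' ∩ B ∈ 𝔉 := hi _ hB'F _ hBF
    have hCinf : (B' ∩ B).Infinite := hInf _ hCmem
    have hCz : G.GZero (B' ∩ B) := (min_gzero hB'min).inter (min_gzero hBmin)
    by_cases hcase : B' ∩ B = B'
    · -- B' ⊆ B, proper since B' ≠ B
      have hsub' : B' ⊆ B := by rw [← hcase]; exact Set.inter_subset_right
      exact min_no_infinite_proper hBmin (min_gzero hB'min)
        (ssubset_of_subset_of_ne hsub' hne') (hInf _ hB'F)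
    · have hss : B' ∩ B ⊂ B' := ssubset_of_subset_of_ne Set.inter_subset_left hcase
      exact min_no_infinite_proper hB'min hCz hss hCinf
end

section
/- Suppose the ultragraph 𝒢 satisfies Condition (RFUM2) and let α be a finite (possibly empty) path on 𝒢. If B ∈ A_s ∪ A_∞ is such that B is infinite and B ⊆ r(α), then there exists a unique ultrafilter 𝔉 in ℬ(α) such that B ∈ 𝔉 and every A ∈ 𝔉 is infinite; explicitly, 𝔉 = {C ∈ ℬ(α) : there exists a finite A ∈ ℬ(α) with B ∖ A ⊆ C}. -/
/-- Suppose `𝒢` satisfies Condition (RFUM2), `α` is a finite (possibly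
empty) path and `B ∈ A_s ∪ A_∞` is infinite with `B ⊆ r(α)`. Then
`𝔉 = {C ∈ ℬ(α) : ∃ finite A ∈ ℬ(α), B ∖ A ⊆ C}` is the unique ultrafilter in `ℬ(α)`
containing `B` all of whose members are infinite. -/
theorem rfum2_unique_cofinite_ultrafilter
    {V E : Type*} [Countable V] [Countable E] (G : Ultragraph V E)
    (hR : G.RFUM2) (α : List E) (hα : G.IsPath α)
    (B : Set V) (hB : G.MinSink B ∨ G.MinInfEmitter B)
    (hBinf : B.Infinite) (hBsub : B ⊆ G.pathRange α) :
    (IsUltrafilterIn (G.bAt α)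
        {C ∈ G.bAt α | ∃ A ∈ G.bAt α, A.Finite ∧ B \ A ⊆ C} ∧
      B ∈ {C ∈ G.bAt α | ∃ A ∈ G.bAt α, A.Finite ∧ B \ A ⊆ C} ∧
      (∀ C ∈ ({C ∈ G.bAt α | ∃ A ∈ G.bAt α, A.Finite ∧ B \ A ⊆ C} : Set (Set V)),
        C.Infinite)) ∧
    ∀ 𝔊 : Set (Set V), IsUltrafilterIn (G.bAt α) 𝔊 → B ∈ 𝔊 →
      (∀ A ∈ 𝔊, A.Infinite) →
      𝔊 = {C ∈ G.bAt α | ∃ A ∈ G.bAt α, A.Finite ∧ B \ A ⊆ C} := by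

  classical
  -- B is in 𝒢⁰
  have hBz : G.GZero B := by rcases hB with h | h; exacts [h.1, h.1]
  -- minimality: every proper 𝒢⁰ subset of B is finite
  have hmin : ∀ C : Set V, G.GZero C → C ⊆ B → C ≠ B → C.Finite := by
    intro C hC hsub hne
    have hss : C ⊂ B := ⟨hsub, fun h' => hne (subset_antisymm hsub h')⟩
    rcases hB with h | h
    · exact h.2.2.2 C hC hss
    · by_contra hCinf
      exact h.2.2.2 C hC hss ⟨Set.not_infinite.mp (h.2.2.1 C hC hss), hCinf⟩
  -- dichotomy for all sets in the accommodating family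
  have dich : ∀ A : Set V, G.AccFam A → (B ∩ A).Finite ∨ (B \ A).Finite := by
    intro A hA
    induction hA with
    | @base A hA =>
      by_cases h : B ⊆ A
      · right; rw [Set.diff_eq_empty.mpr h]; exact Set.finite_empty
      · left
        exact hmin _ (Ultragraph.GZero.inter hBz hA) Set.inter_subset_left
          (fun he => h (Set.inter_eq_left.mp he))
    | @union A₁ A₂ h1 h2 ih1 ih2 =>
      rcases ih1 with f1 | f1
      · rcases ih2 with f2 | f2
        · left
          rw [Set.inter_union_distrib_left]
          exact f1.union f2
        · right; exact f2.subset (fun v hv => ⟨hv.1, fun h => hv.2 (Or.inr h)⟩)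
      · right; exact f1.subset (fun v hv => ⟨hv.1, fun h => hv.2 (Or.inl h)⟩)
    | @inter A₁ A₂ h1 h2 ih1 ih2 =>
      rcases ih1 with f1 | f1
      · left; exact f1.subset (fun v hv => ⟨hv.1, hv.2.1⟩)
      · rcases ih2 with f2 | f2
        · left; exact f2.subset (fun v hv => ⟨hv.1, hv.2.2⟩)
        · right
          refine (f1.union f2).subset ?_
          intro v hv
          by_cases h : v ∈ A₁
          · exact Or.inr ⟨hv.1, fun h2 => hv.2 ⟨h, h2⟩⟩
          · exact Or.inl ⟨hv.1, h⟩
    | @diff A₁ A₂ h1 h2 ih1 ih2 =>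
      rcases ih1 with f1 | f1
      · left; exact f1.subset (fun v hv => ⟨hv.1, hv.2.1⟩)
      · rcases ih2 with f2 | f2
        · right
          refine (f1.union f2).subset ?_
          intro v hv
          by_cases h : v ∈ A₁
          · by_cases h' : v ∈ A₂
            · exact Or.inr ⟨hv.1, h'⟩
            · exact absurd ⟨h, h'⟩ hv.2
          · exact Or.inl ⟨hv.1, h⟩
        · left; exact f2.subset (fun v hv => ⟨hv.1, hv.2.2⟩)
  set F : Set (Set V) := {C ∈ G.bAt α | ∃ A ∈ G.bAt α, A.Finite ∧ B \ A ⊆ C} with hF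
  have hBacc : G.AccFam B := Ultragraph.AccFam.base hBz
  have hBbAt : B ∈ G.bAt α := ⟨hBacc, hBsub⟩
  -- B ∈ F
  have hBF : B ∈ F := by
    refine ⟨hBbAt, ∅, ⟨Ultragraph.AccFam.base Ultragraph.GZero.empty,
      Set.empty_subset _⟩, Set.finite_empty, ?_⟩
    simp
  -- every element of F is infinite
  have hFinf : ∀ C ∈ F, C.Infinite := by
    rintro C ⟨hC, A, hA, hAfin, hsub⟩
    exact (hBinf.diff hAfin).mono hsub
  -- membership criterion
  have hcrit : ∀ C ∈ G.bAt α, (B \ C).Finite → C ∈ F := by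
    intro C hC hfin
    refine ⟨hC, B \ C, ⟨Ultragraph.AccFam.diff hBacc hC.1,
      fun v hv => hBsub hv.1⟩, hfin, ?_⟩
    intro v hv
    by_contra h
    exact hv.2 ⟨hv.1, h⟩
  -- F is a filter
  have hFfil : IsFilterIn (G.bAt α) F := by
    refine ⟨⟨B, hBF⟩, fun C hC => hC.1, fun h => (hFinf ∅ h) Set.finite_empty,
      ?_, ?_⟩
    · rintro C₁ ⟨hC₁, A₁, hA₁, f₁, s₁⟩ C₂ ⟨hC₂, A₂, hA₂, f₂, s₂⟩
      refine ⟨⟨Ultragraph.AccFam.inter hC₁.1 hC₂.1,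
        fun v hv => hC₁.2 hv.1⟩, A₁ ∪ A₂,
        ⟨Ultragraph.AccFam.union hA₁.1 hA₂.1,
          Set.union_subset hA₁.2 hA₂.2⟩, f₁.union f₂, ?_⟩
      intro v hv
      exact ⟨s₁ ⟨hv.1, fun h => hv.2 (Or.inl h)⟩,
        s₂ ⟨hv.1, fun h => hv.2 (Or.inr h)⟩⟩
    · rintro C ⟨hC, A, hA, hAfin, hsub⟩ D hD hCD
      exact ⟨hD, A, hA, hAfin, hsub.trans hCD⟩
  -- maximality
  have hFmax : ∀ η, IsFilterIn (G.bAt α) η → F ⊆ η → η = F := by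
    intro η hη hsub
    refine subset_antisymm ?_ hsub
    intro C hC
    have hCb : C ∈ G.bAt α := hη.2.1 hC
    rcases dich C hCb.1 with hfin | hfin
    · -- B ∩ C finite: then B \ C ∈ F ⊆ η, and C ∩ (B \ C) = ∅ ∈ η, absurd
      exfalso
      have hdF : B \ C ∈ F := by
        refine ⟨⟨Ultragraph.AccFam.diff hBacc hCb.1, fun v hv => hBsub hv.1⟩,
          B ∩ C, ⟨Ultragraph.AccFam.inter hBacc hCb.1,
            fun v hv => hBsub hv.1⟩, hfin, ?_⟩
        intro v hv
        exact ⟨hv.1, fun h => hv.2 ⟨hv.1, h⟩⟩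
      have : C ∩ (B \ C) ∈ η := hη.2.2.2.1 C hC (B \ C) (hsub hdF)
      rw [show C ∩ (B \ C) = (∅ : Set V) from by ext v; simp] at this
      exact hη.2.2.1 this
    · exact hcrit C hCb hfin
  refine ⟨⟨⟨hFfil, hFmax⟩, hBF, hFinf⟩, ?_⟩
  intro 𝔊 h𝔊 hB𝔊 hinf
  have hsub : 𝔊 ⊆ F := by
    intro C hC
    have hCb : C ∈ G.bAt α := h𝔊.1.2.1 hC
    rcases dich C hCb.1 with hfin | hfin
    · exact absurd hfin (hinf (B ∩ C) (h𝔊.1.2.2.2.1 B hB𝔊 C hC))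
    · exact hcrit C hCb hfin
  exact (h𝔊.2 F hFfil hsub).symm
end
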